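/- Let ψ be an analytic polynomial of degree at most m − 1 and set ζ_j = e^{2πij/(2m)} for 0 ≤ j ≤ 2m − 1. Define vectors f_j, g_j ∈ ℓ² by f_j(k) = conj(ψ(ζ_j)) ζ_j^k for 0 ≤ k < m and f_j(k) = 0 for k ≥ m, and g_j(n) = conj(ζ_j)^n for 0 ≤ n < m and g_j(n) = 0 for n ≥ m, and let A_j be the rank-one operator A_j x = ⟨x, f_j⟩ g_j on ℓ². Then the Hankel matrix Γ_ψ = {ψ̂(j+k)}_{j,k≥0}, as an operator on ℓ², equals (1/(2m)) Σ_{j=0}^{2m−1} A_j. -/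

import Mathlib

open MeasureTheory Complex Real

noncomputable section

/-- ℓ² of ℕ over ℂ. -/
abbrev l2 : Type := lp (fun _ : ℕ => ℂ) 2

/-- The points `ζ_j = e^{2πij/(2m)}`. -/
noncomputable def zeta (m : ℕ) (j : ℕ) : ℂ :=
  Complex.exp (2 * (π : ℂ) * Complex.I * (j : ℂ) / (2 * (m : ℂ)))

/-- The value `ψ(ζ_j)` of the analytic polynomial `ψ` with coefficients `c`. -/
noncomputable def psiVal (m : ℕ) (c : ℕ → ℂ) (j : ℕ) : ℂ :=
  ∑ k ∈ Finset.range m, c k * zeta m j ^ k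

/-- The vector `f_j ∈ ℓ²`: `f_j(k) = conj(ψ(ζ_j)) ζ_j^k` for `k < m`, `0` otherwise. -/
noncomputable def fVec (m : ℕ) (c : ℕ → ℂ) (j : ℕ) : l2 :=
  ∑ k ∈ Finset.range m, lp.single 2 k ((starRingEnd ℂ) (psiVal m c j) * zeta m j ^ k)

/-- The vector `g_j ∈ ℓ²`: `g_j(n) = conj(ζ_j)^n` for `n < m`, `0` otherwise. -/
noncomputable def gVec (m : ℕ) (j : ℕ) : l2 :=
  ∑ n ∈ Finset.range m, lp.single 2 n ((starRingEnd ℂ) (zeta m j) ^ n)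

/-- The rank-one operator `A_j x = ⟨x, f_j⟩ g_j` (inner product linear in the first slot,
i.e. `⟪f_j, x⟫` in Mathlib's convention). -/
noncomputable def rankOneA (m : ℕ) (c : ℕ → ℂ) (j : ℕ) : l2 →L[ℂ] l2 :=
  (innerSL ℂ (fVec m c j)).smulRight (gVec m j)

lemma l2_clm_ext {T S : l2 →L[ℂ] l2}
    (h : ∀ k, T (lp.single 2 k 1) = S (lp.single 2 k 1)) : T = S := by
  refine ContinuousLinearMap.ext fun f => ?_
  have hf : HasSum (fun i => lp.single 2 i (f i)) f :=
    lp.hasSum_single (by norm_num) f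
  have h1 : HasSum (fun i => T (lp.single 2 i (f i))) (T f) := T.hasSum hf
  have h2 : HasSum (fun i => S (lp.single 2 i (f i))) (S f) := S.hasSum hf
  have heq : (fun i => T (lp.single 2 i (f i))) = fun i => S (lp.single 2 i (f i)) := by
    funext i
    have hsm : lp.single (E := fun _ : ℕ => ℂ) 2 i (f i) = f i • lp.single 2 i 1 := by
      rw [← lp.single_smul]
      norm_num
    rw [hsm, _root_.map_smul, _root_.map_smul, h i]
  rw [heq] at h1
  exact h1.unique h2

lemma sum_single_apply (m : ℕ) (a : ℕ → ℂ) (n : ℕ) :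
    ((∑ k ∈ Finset.range m, lp.single 2 k (a k) : l2) : ∀ _ : ℕ, ℂ) n
      = if n < m then a n else 0 := by
  rw [lp.coeFn_sum, Finset.sum_apply]
  simp [lp.single_apply, Finset.sum_dite_eq]

lemma zeta_eq_pow (m j : ℕ) : zeta m j = zeta m 1 ^ j := by
  rw [zeta, zeta, ← Complex.exp_nat_mul]
  ring_nf

lemma conj_zeta_mul_zeta (m j : ℕ) : (starRingEnd ℂ) (zeta m j) * zeta m j = 1 := by
  rw [zeta, ← Complex.exp_conj, ← Complex.exp_add]
  have : (starRingEnd ℂ) (2 * (π : ℂ) * Complex.I * (j : ℂ) / (2 * (m : ℂ)))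
      = -(2 * (π : ℂ) * Complex.I * (j : ℂ) / (2 * (m : ℂ))) := by
    simp [map_div₀, Complex.conj_I, ← Complex.ofReal_ofNat]
    ring
  rw [this, neg_add_cancel, Complex.exp_zero]

/-- For an analytic polynomial `ψ` of degree at most `m − 1`, the Hankel
operator `Γ_ψ` equals `(1/(2m)) Σ_{j=0}^{2m−1} A_j`. -/
theorem hankel_eq_average_of_rank_one
    (m : ℕ) (hm : 0 < m) (c : ℕ → ℂ) (hc : ∀ j, m ≤ j → c j = 0)
    (T : l2 →L[ℂ] l2)
    (hT : ∀ j k : ℕ, (T (lp.single 2 k 1)) j = c (j + k)) :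
    T = (1 / (2 * (m : ℂ))) • ∑ j ∈ Finset.range (2 * m), rankOneA m c j := by
  set ω : ℂ := zeta m 1 with hw_def
  have h2m : (2 * m : ℕ) ≠ 0 := by omega
  have h2mC : (2 * (m : ℂ)) ≠ 0 := by
    simp [Nat.cast_ne_zero]; exact_mod_cast hm.ne'
  have hprim : IsPrimitiveRoot ω (2 * m) := by
    have := Complex.isPrimitiveRoot_exp (2 * m) h2m
    convert this using 2
    push_cast [hw_def, zeta]
    ring_nf
  have hwpow : ω ^ (2 * m) = 1 := hprim.pow_eq_one
  have hw_ne : ω ≠ 0 := by rw [hw_def, zeta]; exact Complex.exp_ne_zero _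
  have hconj : (starRingEnd ℂ) ω = ω⁻¹ :=
    eq_inv_of_mul_eq_one_left (conj_zeta_mul_zeta m 1)
  refine l2_clm_ext fun k => ?_
  refine lp.ext (funext fun n => ?_)
  have hlhs : ((T (lp.single 2 k 1)) : ∀ _ : ℕ, ℂ) n = c (n + k) := hT n k
  rw [hlhs]
  have hf_app : ∀ j, ((fVec m c j : ∀ _ : ℕ, ℂ) k)
      = if k < m then (starRingEnd ℂ) (psiVal m c j) * zeta m j ^ k else 0 := fun j =>
    sum_single_apply m _ k
  have hg_app : ∀ j, ((gVec m j : ∀ _ : ℕ, ℂ) n)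
      = if n < m then (starRingEnd ℂ) (zeta m j) ^ n else 0 := fun j =>
    sum_single_apply m _ n
  have hrhs : ((((1 / (2 * (m : ℂ))) • ∑ j ∈ Finset.range (2 * m), rankOneA m c j)
        (lp.single 2 k 1)) : ∀ _ : ℕ, ℂ) n
      = (1 / (2 * (m : ℂ))) * ∑ j ∈ Finset.range (2 * m),
          ((starRingEnd ℂ) ((fVec m c j : ∀ _ : ℕ, ℂ) k)
            * (gVec m j : ∀ _ : ℕ, ℂ) n) := by
    rw [ContinuousLinearMap.smul_apply, ContinuousLinearMap.sum_apply, lp.coeFn_smul,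
      Pi.smul_apply, lp.coeFn_sum, Finset.sum_apply, smul_eq_mul]
    congr 1
    refine Finset.sum_congr rfl fun j _ => ?_
    rw [rankOneA, ContinuousLinearMap.smulRight_apply, innerSL_apply_apply, lp.coeFn_smul,
      Pi.smul_apply, smul_eq_mul]
    congr 1
    rw [lp.inner_single_right]
    simp [RCLike.inner_apply]
  rw [hrhs]
  by_cases hk : k < m
  · by_cases hn : n < m
    · -- main case
      have hterm : ∀ j ∈ Finset.range (2 * m),
          (starRingEnd ℂ) ((fVec m c j : ∀ _ : ℕ, ℂ) k) * (gVec m j : ∀ _ : ℕ, ℂ) n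
          = ∑ l ∈ Finset.range m, c l * (ω ^ l * (ω⁻¹) ^ (n + k)) ^ j := by
        intro j _
        have hcz : (starRingEnd ℂ) (zeta m j) = (ω⁻¹) ^ j := by
          rw [zeta_eq_pow m j, ← hw_def, map_pow, hconj]
        rw [hf_app, hg_app, if_pos hk, if_pos hn, map_mul, Complex.conj_conj, map_pow, hcz,
          psiVal, Finset.sum_mul, Finset.sum_mul]
        refine Finset.sum_congr rfl fun l _ => ?_
        rw [zeta_eq_pow m j, ← hw_def]
        ring
      rw [Finset.sum_congr rfl hterm, Finset.sum_comm]
      have hgeom : ∀ l ∈ Finset.range m,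
          ∑ j ∈ Finset.range (2 * m), c l * (ω ^ l * (ω⁻¹) ^ (n + k)) ^ j
          = if l = n + k then c l * (2 * m : ℂ) else 0 := by
        intro l hl
        rw [← Finset.mul_sum]
        set x : ℂ := ω ^ l * (ω⁻¹) ^ (n + k) with hx_def
        have hx2m : x ^ (2 * m) = 1 := by
          have h1 : (ω ^ l) ^ (2 * m) = 1 := by
            rw [← pow_mul, mul_comm, pow_mul, hwpow, one_pow]
          have h2 : ((ω⁻¹) ^ (n + k)) ^ (2 * m) = 1 := by
            rw [← pow_mul, mul_comm, pow_mul, inv_pow, hwpow, inv_one, one_pow]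
          rw [hx_def, mul_pow, h1, h2, one_mul]
        by_cases hx1 : x = 1
        · have hweq : ω ^ l = ω ^ (n + k) := by
            have h' : ω ^ l * (ω ^ (n + k))⁻¹ = 1 := by
              rw [← inv_pow]; exact hx1
            exact (mul_inv_eq_one₀ (pow_ne_zero _ hw_ne)).mp h'
          have hl' : l = n + k :=
            hprim.pow_inj (by have := Finset.mem_range.mp hl; omega) (by omega) hweq
          rw [if_pos hl', hx1]
          simp
        · have hl' : l ≠ n + k := by
            rintro rfl
            exact hx1 (by rw [hx_def, ← mul_pow, mul_inv_cancel₀ hw_ne, one_pow])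
          rw [if_neg hl', geom_sum_eq hx1, hx2m, sub_self, zero_div, mul_zero]
      rw [Finset.sum_congr rfl hgeom]
      have hfinal : ∑ l ∈ Finset.range m, (if l = n + k then c l * (2 * m : ℂ) else 0)
          = c (n + k) * (2 * m : ℂ) := by
        rw [Finset.sum_ite_eq' (Finset.range m) (n + k) (fun l => c l * (2 * m : ℂ))]
        by_cases hnk : n + k ∈ Finset.range m
        · rw [if_pos hnk]
        · rw [if_neg hnk, hc (n + k) (by have := Finset.mem_range.not.mp hnk; omega),
            zero_mul]
      rw [hfinal]
      field_simp
      rw [mul_div_assoc, div_self (by exact_mod_cast hm.ne'), mul_one]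
    · have h0 : c (n + k) = 0 := hc _ (by omega)
      rw [h0, Finset.sum_eq_zero fun j _ => by rw [hg_app, if_neg hn, mul_zero], mul_zero]
  · have h0 : c (n + k) = 0 := hc _ (by omega)
    rw [h0, Finset.sum_eq_zero fun j _ => by
      rw [hf_app, if_neg hk, map_zero, zero_mul], mul_zero]
end
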